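/- Let Z = (e^n, e^1, …, e^{n-1}) be the n-cycle permutation matrix and let α_1, …, α_n be nonpositive reals with A = α_1 I + α_2 Z + ⋯ + α_n Z^{n-1}. Then A^{-1} exists and is an N-matrix with bdsw structure if and only if A < 0 entrywise, α_2 < α_1 < 0, and α_r = α_2^{r-1}/α_1^{r-2} for r = 3, …, n. -/

import Mathlib

open Matrix Finset
/-- A *bi-diagonal south-west* (bdsw) matrix: the diagonal, the super diagonal and the
south-west corner entry are nonzero, and all other entries are zero. -/
def Bdsw {n : ℕ} (B : Matrix (Fin (n + 2)) (Fin (n + 2)) ℝ) : Prop :=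
  (∀ i, B i i ≠ 0) ∧
  (∀ i j : Fin (n + 2), (j : ℕ) = (i : ℕ) + 1 → B i j ≠ 0) ∧
  (B (Fin.last (n + 1)) 0 ≠ 0) ∧
  (∀ i j : Fin (n + 2), i ≠ j → (j : ℕ) ≠ (i : ℕ) + 1 →
    ¬(i = Fin.last (n + 1) ∧ j = 0) → B i j = 0)

/-- The `n`-cycle permutation matrix `Z = (e^n, e^1, …, e^{n-1})`. -/
def Zmat (n : ℕ) : Matrix (Fin (n + 2)) (Fin (n + 2)) ℝ :=
  Matrix.of fun i j => if j = i + 1 then 1 else 0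

/-!
The matrix `A` is circulant, `A i j = α (j - i)`. If `A⁻¹` vanishes off the diagonal and the
cyclic superdiagonal, row `0` of `A⁻¹ * A = 1` is a two-term recurrence
`d α j + e α (j - 1) = δ j 0`, which forces `α j = α 0 * t ^ j` with `t = α 1 / α 0`; the
equation at `j = 0` then reads `d α 0 (1 - t ^ (n + 2)) = 1`, and the signs force `t > 1`.
Conversely, for geometric `α` the geometric sum and `Z ^ (n + 2) = 1` give
`(1 - t Z) A = α 0 (1 - t ^ (n + 2)) • 1`, so `A⁻¹` is a positive multiple of `1 - t Z`.
-/

open Fin.NatCast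

lemma Fin.eq_add_one_iff_val_eq_or_last {n : ℕ} (i j : Fin (n + 2)) :
    j = i + 1 ↔ (j : ℕ) = i + 1 ∨ (i = Fin.last (n + 1) ∧ j = 0) := by
  rw [Fin.ext_iff (b := i + 1), Fin.val_add_one]
  split_ifs with hi
  · subst hi
    simp only [Fin.val_last, true_and, Fin.ext_iff (a := j), Fin.val_zero]
    omega
  · simp only [hi, false_and, or_false]

lemma bdsw_iff {n : ℕ} (B : Matrix (Fin (n + 2)) (Fin (n + 2)) ℝ) :
    Bdsw B ↔ (∀ i, B i i ≠ 0) ∧ (∀ i, B i (i + 1) ≠ 0) ∧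
      ∀ i j, j ≠ i → j ≠ i + 1 → B i j = 0 := by
  refine and_congr Iff.rfl
    ⟨fun ⟨hsup, hcorner, hzero⟩ => ⟨fun i => ?_, fun i j h1 h2 => ?_⟩,
      fun ⟨hsup, hzero⟩ => ⟨fun i j h => ?_, ?_, fun i j h1 h2 h3 => ?_⟩⟩
  · rcases (Fin.eq_add_one_iff_val_eq_or_last i (i + 1)).1 rfl with h | ⟨rfl, h⟩
    · exact hsup _ _ h
    · rwa [h]
  · simp only [Ne, Fin.eq_add_one_iff_val_eq_or_last, not_or] at h2
    exact hzero i j (Ne.symm h1) h2.1 h2.2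
  · rw [(Fin.eq_add_one_iff_val_eq_or_last i j).2 (Or.inl h)]
    exact hsup i
  · rw [← Fin.last_add_one]
    exact hsup _
  · refine hzero i j (Ne.symm h1) ?_
    simp only [Ne, Fin.eq_add_one_iff_val_eq_or_last, not_or]
    exact ⟨h2, h3⟩

lemma zmat_pow_apply (n k : ℕ) (i j : Fin (n + 2)) :
    (Zmat n ^ k) i j = if j = i + k then 1 else 0 := by
  induction k generalizing j with
  | zero => simp [one_apply, eq_comm]
  | succ k ih =>
    simp_rw [pow_succ, mul_apply, ih]
    simp only [Zmat, of_apply, ite_mul, one_mul, zero_mul, Finset.sum_ite_eq', Finset.mem_univ,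
      if_true, Nat.cast_succ, add_assoc]

lemma zmat_pow_self (n : ℕ) : Zmat n ^ (n + 2) = 1 := by
  ext i j
  rw [zmat_pow_apply, Fin.natCast_self, add_zero, one_apply]
  exact if_congr eq_comm rfl rfl

lemma sum_smul_zmat_pow_apply {n : ℕ} (α : Fin (n + 2) → ℝ) (i j : Fin (n + 2)) :
    (∑ r : Fin (n + 2), α r • Zmat n ^ (r : ℕ)) i j = α (j - i) := by
  have hr : ∀ r, j = i + r ↔ r = j - i := fun r => by rw [eq_comm, eq_sub_iff_add_eq']
  simp only [Matrix.sum_apply, Matrix.smul_apply, zmat_pow_apply, Fin.cast_val_eq_self,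
    smul_eq_mul, mul_ite, mul_one, mul_zero, hr, Finset.sum_ite_eq', Finset.mem_univ, if_true]

lemma mul_apply_of_bidiagonal {R : Type*} [Semiring R] {n : ℕ}
    {B : Matrix (Fin (n + 2)) (Fin (n + 2)) R} (hB : ∀ i j, j ≠ i → j ≠ i + 1 → B i j = 0)
    (A : Matrix (Fin (n + 2)) (Fin (n + 2)) R) (i j : Fin (n + 2)) :
    (B * A) i j = B i i * A i j + B i (i + 1) * A (i + 1) j :=
  mul_apply.trans <| Fintype.sum_eq_add i (i + 1) (by simp) fun k hk => by
    rw [hB i k hk.1 hk.2, zero_mul]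

lemma Fin.eq_mul_pow_of_eq_mul_sub_one {M : Type*} [CommMonoid M] {m : ℕ}
    {f : Fin (m + 1) → M} {t : M} (h : ∀ j, j ≠ 0 → f j = t * f (j - 1)) (j : Fin (m + 1)) :
    f j = f 0 * t ^ (j : ℕ) := by
  induction j using Fin.induction with
  | zero => simp
  | succ i ih =>
    rw [h _ (Fin.succ_ne_zero i), ← Fin.coeSucc_eq_succ, add_sub_cancel_right, ih,
      Fin.coeSucc_eq_succ, Fin.val_succ, Fin.val_castSucc, pow_succ']
    exact mul_left_comm _ _ _

lemma mul_pow_div_eq_pow_div_pow {K : Type*} [Field K] {a : K} (ha : a ≠ 0) (b : K) {r : ℕ}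
    (hr : 1 ≤ r) : a * (b / a) ^ r = b ^ r / a ^ (r - 1) := by
  obtain ⟨r, rfl⟩ := Nat.exists_eq_add_of_le' hr
  rw [Nat.add_sub_cancel, div_pow, pow_succ, pow_succ]
  field_simp

lemma forall_eq_pow_div_pow_iff {K : Type*} [Field K] {m : ℕ} (α : Fin (m + 2) → K)
    (h0 : α 0 ≠ 0) :
    (∀ r : Fin (m + 2), 2 ≤ (r : ℕ) → α r = α 1 ^ (r : ℕ) / α 0 ^ ((r : ℕ) - 1)) ↔
      ∀ r : Fin (m + 2), α r = α 0 * (α 1 / α 0) ^ (r : ℕ) := by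
  refine ⟨fun h r => ?_, fun h r hr => by rw [h, mul_pow_div_eq_pow_div_pow h0 _ (by omega)]⟩
  rcases Nat.lt_or_ge r 2 with hr | hr
  · interval_cases hv : (r : ℕ)
    · obtain rfl : r = 0 := Fin.ext hv
      simp
    · obtain rfl : r = 1 := Fin.ext (by rw [hv, Fin.val_one])
      field_simp
  · rw [h r hr, mul_pow_div_eq_pow_div_pow h0 _ (by omega)]

lemma lt_and_eq_geometric_of_cyclic_recurrence {n : ℕ} {α : Fin (n + 2) → ℝ} {d e : ℝ}
    (h : ∀ j, d * α j + e * α (j - 1) = if j = 0 then 1 else 0)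
    (h0 : α 0 < 0) (h1 : α 1 < 0) (he : e < 0) :
    α 1 < α 0 ∧ ∀ j, α j = α 0 * (α 1 / α 0) ^ (j : ℕ) := by
  set t := α 1 / α 0
  have hrow1 : d * α 1 + e * α 0 = 0 := by simpa using h 1
  have hd : 0 < d := by nlinarith
  have he_eq : e = -(d * t) := by
    rw [mul_div_assoc', neg_div', eq_div_iff h0.ne]
    linarith
  have hgeom : ∀ j, α j = α 0 * t ^ (j : ℕ) := Fin.eq_mul_pow_of_eq_mul_sub_one fun j hj => by
    have hrow := h j
    rw [if_neg hj, he_eq] at hrow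
    have : d * (α j - t * α (j - 1)) = 0 := by linear_combination hrow
    exact sub_eq_zero.1 ((mul_eq_zero.1 this).resolve_left hd.ne')
  have hrow0 : d * α 0 * (1 - t ^ (n + 2)) = 1 := by
    have h00 := h 0
    rw [if_pos rfl, hgeom (0 - 1), zero_sub, Fin.coe_neg_one, he_eq] at h00
    linear_combination h00
  have htN : 1 < t ^ (n + 2) := by nlinarith [mul_neg_of_pos_of_neg hd h0]
  have ht : 1 < t := (one_lt_pow_iff_of_nonneg (div_pos_of_neg_of_neg h1 h0).le (by omega)).1 htN
  exact ⟨(one_lt_div_of_neg h0).1 ht, hgeom⟩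

lemma one_sub_smul_zmat_mul_sum_pow (n : ℕ) (t : ℝ) :
    (1 - t • Zmat n) * ∑ r : Fin (n + 2), t ^ (r : ℕ) • Zmat n ^ (r : ℕ) =
      (1 - t ^ (n + 2)) • 1 := by
  simp_rw [← smul_pow]
  rw [Fin.sum_univ_eq_sum_range (fun r => (t • Zmat n) ^ r), mul_neg_geom_sum, smul_pow,
    zmat_pow_self, sub_smul, one_smul]

lemma smul_one_sub_smul_zmat_mul_sum_geometric {n : ℕ} {a t : ℝ}
    (hc : a * (1 - t ^ (n + 2)) ≠ 0) :
    ((a * (1 - t ^ (n + 2)))⁻¹ • (1 - t • Zmat n)) *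
      ∑ r : Fin (n + 2), (a * t ^ (r : ℕ)) • Zmat n ^ (r : ℕ) = 1 := by
  simp_rw [mul_smul a, ← Finset.smul_sum]
  rw [smul_mul_smul_comm, one_sub_smul_zmat_mul_sum_pow, smul_smul, mul_assoc,
    inv_mul_cancel₀ hc, one_smul]

lemma smul_one_sub_smul_zmat_apply {n : ℕ} (c t : ℝ) (i j : Fin (n + 2)) :
    (c • (1 - t • Zmat n)) i j = if j = i then c else if j = i + 1 then -(c * t) else 0 := by
  by_cases hij : j = i
  · subst hij
    simp [Zmat, one_apply]
  · simp only [Matrix.smul_apply, Matrix.sub_apply, smul_eq_mul, one_apply, Zmat, of_apply,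
      if_neg hij, if_neg (Ne.symm hij)]
    split_ifs <;> ring

lemma bdsw_smul_one_sub_smul_zmat {n : ℕ} {c t : ℝ} (hc : c ≠ 0) (ht : t ≠ 0) :
    Bdsw (c • (1 - t • Zmat n)) := by
  refine (bdsw_iff _).2 ⟨fun i => ?_, fun i => ?_, fun i j h1 h2 => ?_⟩ <;>
    rw [smul_one_sub_smul_zmat_apply]
  · rwa [if_pos rfl]
  · rw [if_neg (by simp), if_pos rfl]
    exact neg_ne_zero.2 (mul_ne_zero hc ht)
  · rw [if_neg h1, if_neg h2]

theorem stmt16_general {n : ℕ} (α : Fin (n + 2) → ℝ)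
    (A : Matrix (Fin (n + 2)) (Fin (n + 2)) ℝ)
    (hA : A = ∑ r : Fin (n + 2), α r • Zmat n ^ (r : ℕ)) :
    -- `A⁻¹` exists and is an `N`-matrix (a `Z`-matrix whose inverse is entrywise
    -- negative) with the bdsw structure
    (A.det ≠ 0 ∧ (∀ i j, i ≠ j → A⁻¹ i j ≤ 0) ∧ (∀ i j, A i j < 0) ∧ Bdsw A⁻¹) ↔
    ((∀ i j, A i j < 0) ∧ α 1 < α 0 ∧ α 0 < 0 ∧
      (∀ r : Fin (n + 2), 2 ≤ (r : ℕ) →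
        α r = (α 1) ^ (r : ℕ) / (α 0) ^ ((r : ℕ) - 1))) := by
  have hAij : ∀ i j, A i j = α (j - i) := fun i j => hA ▸ sum_smul_zmat_pow_apply α i j
  constructor
  · rintro ⟨hdet, hoff, hneg, hB⟩
    obtain ⟨-, hsup, hzero⟩ := (bdsw_iff _).1 hB
    have hα : ∀ r, α r < 0 := fun r => by simpa only [hAij, sub_zero] using hneg 0 r
    have hrow : ∀ j, A⁻¹ 0 0 * α j + A⁻¹ 0 1 * α (j - 1) = if j = 0 then 1 else 0 := by
      intro j
      have h := congrFun₂ (A.nonsing_inv_mul (isUnit_iff_ne_zero.2 hdet)) 0 j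
      rw [mul_apply_of_bidiagonal hzero, hAij, hAij, zero_add, sub_zero, one_apply] at h
      exact h.trans (if_congr eq_comm rfl rfl)
    have he : A⁻¹ 0 1 < 0 :=
      (hoff 0 1 zero_ne_one).lt_of_ne (zero_add (1 : Fin (n + 2)) ▸ hsup 0)
    obtain ⟨h10, hgeom⟩ := lt_and_eq_geometric_of_cyclic_recurrence hrow (hα 0) (hα 1) he
    exact ⟨hneg, h10, hα 0, (forall_eq_pow_div_pow_iff α (hα 0).ne).2 hgeom⟩
  · rintro ⟨hneg, h10, h0, hpow⟩
    set t := α 1 / α 0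
    have ht : 1 < t := (one_lt_div_of_neg h0).2 h10
    have hgeom := (forall_eq_pow_div_pow_iff α h0.ne).1 hpow
    have hc : 0 < α 0 * (1 - t ^ (n + 2)) :=
      mul_pos_of_neg_of_neg h0 (sub_neg.2 (one_lt_pow₀ ht (by omega)))
    have hleft : ((α 0 * (1 - t ^ (n + 2)))⁻¹ • (1 - t • Zmat n)) * A = 1 := by
      rw [hA, Finset.sum_congr rfl fun r _ => by rw [hgeom r]]
      exact smul_one_sub_smul_zmat_mul_sum_geometric hc.ne'
    rw [inv_eq_left_inv hleft]
    refine ⟨det_ne_zero_of_left_inverse hleft, fun i j hij => ?_, hneg,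
      bdsw_smul_one_sub_smul_zmat (inv_ne_zero hc.ne') (zero_lt_one.trans ht).ne'⟩
    rw [smul_one_sub_smul_zmat_apply, if_neg (Ne.symm hij)]
    split_ifs
    · exact neg_nonpos.2 (by positivity)
    · rfl

theorem stmt16 {n : ℕ} (α : Fin (n + 2) → ℝ) (hα : ∀ r, α r ≤ 0)
    (A : Matrix (Fin (n + 2)) (Fin (n + 2)) ℝ)
    (hA : A = ∑ r : Fin (n + 2), α r • Zmat n ^ (r : ℕ)) :
    -- `A⁻¹` exists and is an `N`-matrix (a `Z`-matrix whose inverse is entrywise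
    -- negative) with the bdsw structure
    (A.det ≠ 0 ∧ (∀ i j, i ≠ j → A⁻¹ i j ≤ 0) ∧ (∀ i j, A i j < 0) ∧ Bdsw A⁻¹) ↔
    ((∀ i j, A i j < 0) ∧ α 1 < α 0 ∧ α 0 < 0 ∧
      (∀ r : Fin (n + 2), 2 ≤ (r : ℕ) →
        α r = (α 1) ^ (r : ℕ) / (α 0) ^ ((r : ℕ) - 1))) :=
  stmt16_general α A hA
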